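/- Let d ≥ 3, λ ∈ (d−3, d−1], c₀ > 0, and define m(t,r) = (2^{d−3−λ}/Γ((λ−d+3)/2)) c₀ t^{−(λ−d+3)/2} r^{λ+1} e^{−r²/(4t)} ∫₀¹ s^{d/2−1}(1−s)^{(λ−d+3)/2 −1} e^{(r²/(4t)) s} ds. Then for every y* > 0, ∫₀^{√t y*} m(t,r)/r^{d−1} dr ≤ (C c₀/(λ−d+3)) B(d/2, (λ−d+3)/2) y*^{λ−d+3}, uniformly in t > 0, where C = C(λ,d) = 2^{d−3−λ}/Γ((λ−d+3)/2) and B is the Euler Beta function; in particular sup_{t>0} ∫₀^{√t y*} m(t,r)/r^{d−1} dr < ∞. -/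

import Mathlib

open MeasureTheory

/-- The barrier function `m(t,r)` solving the Bessel-type problem with
initial datum `c₀ r^{d-2}`. -/
noncomputable def besselBarrier (d : ℕ) (lam c₀ : ℝ) (t r : ℝ) : ℝ :=
  ((2 : ℝ) ^ ((d : ℝ) - 3 - lam) / Real.Gamma ((lam - d + 3) / 2)) * c₀ *
    t ^ (-(lam - (d : ℝ) + 3) / 2) * r ^ (lam + 1) * Real.exp (-r ^ 2 / (4 * t)) *
    ∫ s in Set.Ioo (0 : ℝ) 1,
      s ^ ((d : ℝ) / 2 - 1) * (1 - s) ^ ((lam - (d : ℝ) + 3) / 2 - 1) *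
        Real.exp (r ^ 2 / (4 * t) * s)

/-!
Write `c = λ - d + 3` and `X = r² / (4t)`. Since `e^{Xs} ≤ e^X` on `(0,1)`, the inner integral
of `m(t,r)` is at most `e^X B(d/2, c/2)`, which cancels the Gaussian factor `e^{-X}`. Hence
`m(t,r) / r^{d-1} ≤ C c₀ B t^{-c/2} r^{c-1}`, and integrating over `(0, √t y*]` produces
`(√t y*)^c / c`, whose power of `t` cancels `t^{-c/2}` exactly.
-/

open Real Set ProbabilityTheory

lemma ofReal_betaIntegrand {a b x : ℝ} (hx : x ∈ Icc (0 : ℝ) 1) :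
    ((x ^ (a - 1) * (1 - x) ^ (b - 1) : ℝ) : ℂ) =
      (x : ℂ) ^ ((a : ℂ) - 1) * (1 - (x : ℂ)) ^ ((b : ℂ) - 1) := by
  rw [Complex.ofReal_mul, Complex.ofReal_cpow hx.1, Complex.ofReal_cpow (sub_nonneg.2 hx.2)]
  push_cast
  rfl

lemma integrableOn_betaIntegrand {a b : ℝ} (ha : 0 < a) (hb : 0 < b) :
    IntegrableOn (fun x : ℝ => x ^ (a - 1) * (1 - x) ^ (b - 1)) (Ioo 0 1) := by
  have h : IntegrableOn
      (fun x : ℝ => ((x : ℂ) ^ ((a : ℂ) - 1) * (1 - (x : ℂ)) ^ ((b : ℂ) - 1)).re)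
      (Ioc 0 1) :=
    (Complex.betaIntegral_convergent (u := a) (v := b) (by simpa) (by simpa)).1.re
  refine (h.mono_set Ioo_subset_Ioc_self).congr_fun (fun x hx => ?_) measurableSet_Ioo
  simp [← ofReal_betaIntegrand (Ioo_subset_Icc_self hx)]

lemma integral_betaIntegrand {a b : ℝ} (ha : 0 < a) (hb : 0 < b) :
    ∫ x in Ioo (0 : ℝ) 1, x ^ (a - 1) * (1 - x) ^ (b - 1) = beta a b := by
  have hbeta : Complex.betaIntegral a b =
      ((∫ x in (0 : ℝ)..1, x ^ (a - 1) * (1 - x) ^ (b - 1) : ℝ) : ℂ) := by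
    rw [Complex.betaIntegral, ← intervalIntegral.integral_ofReal]
    refine intervalIntegral.integral_congr fun x hx => ?_
    rw [uIcc_of_le zero_le_one] at hx
    exact (ofReal_betaIntegrand hx).symm
  have h := beta_eq_betaIntegralReal a b ha hb
  rw [hbeta, Complex.ofReal_re, intervalIntegral.integral_of_le zero_le_one,
    integral_Ioc_eq_integral_Ioo] at h
  exact h.symm

lemma betaIntegrand_nonneg {a b s : ℝ} (hs : s ∈ Icc (0 : ℝ) 1) :
    0 ≤ s ^ (a - 1) * (1 - s) ^ (b - 1) :=
  mul_nonneg (rpow_nonneg hs.1 _) (rpow_nonneg (sub_nonneg.2 hs.2) _)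

lemma integral_betaIntegrand_mul_exp_le {a b X : ℝ} (ha : 0 < a) (hb : 0 < b) (hX : 0 ≤ X) :
    ∫ s in Ioo (0 : ℝ) 1, s ^ (a - 1) * (1 - s) ^ (b - 1) * exp (X * s) ≤
      exp X * beta a b := by
  rw [← integral_betaIntegrand ha hb, ← integral_const_mul]
  refine integral_mono_of_nonneg ?_ ((integrableOn_betaIntegrand ha hb).const_mul _) ?_
  all_goals filter_upwards [ae_restrict_mem measurableSet_Ioo] with s hs
  · exact mul_nonneg (betaIntegrand_nonneg (Ioo_subset_Icc_self hs)) (exp_nonneg _)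
  · rw [mul_comm (exp X)]
    refine mul_le_mul_of_nonneg_left ?_ (betaIntegrand_nonneg (Ioo_subset_Icc_self hs))
    exact exp_le_exp.2 (mul_le_of_le_one_right hX hs.2.le)

lemma integral_Ioc_rpow_sub_one {c L : ℝ} (hc : 0 < c) (hL : 0 ≤ L) :
    ∫ r in Ioc 0 L, r ^ (c - 1) = L ^ c / c := by
  rw [← intervalIntegral.integral_of_le hL, integral_rpow (Or.inl (by linarith)),
    sub_add_cancel, zero_rpow hc.ne', sub_zero]

section besselBarrier

variable {d : ℕ} {lam c₀ t r : ℝ}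

lemma besselBarrier_nonneg (hlam : (d : ℝ) - 3 < lam) (hc₀ : 0 ≤ c₀) (ht : 0 ≤ t)
    (hr : 0 ≤ r) : 0 ≤ besselBarrier d lam c₀ t r := by
  have hΓ : 0 < Gamma ((lam - d + 3) / 2) := Gamma_pos_of_pos (by linarith)
  have hI : 0 ≤ ∫ s in Ioo (0 : ℝ) 1, s ^ ((d : ℝ) / 2 - 1) *
      (1 - s) ^ ((lam - (d : ℝ) + 3) / 2 - 1) * exp (r ^ 2 / (4 * t) * s) :=
    setIntegral_nonneg measurableSet_Ioo fun s hs =>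
      mul_nonneg (betaIntegrand_nonneg (Ioo_subset_Icc_self hs)) (exp_nonneg _)
  unfold besselBarrier
  positivity

lemma besselBarrier_le (hd : 0 < d) (hlam : (d : ℝ) - 3 < lam) (hc₀ : 0 ≤ c₀) (ht : 0 ≤ t)
    (hr : 0 ≤ r) :
    besselBarrier d lam c₀ t r ≤
      (2 : ℝ) ^ ((d : ℝ) - 3 - lam) / Gamma ((lam - d + 3) / 2) * c₀ *
      t ^ (-(lam - (d : ℝ) + 3) / 2) * r ^ (lam + 1) * beta (d / 2) ((lam - d + 3) / 2) := by
  have hΓ : 0 < Gamma ((lam - d + 3) / 2) := Gamma_pos_of_pos (by linarith)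
  have hI := integral_betaIntegrand_mul_exp_le (a := d / 2) (b := (lam - d + 3) / 2)
    (X := r ^ 2 / (4 * t)) (by positivity) (by linarith) (by positivity)
  have hdamped : exp (-r ^ 2 / (4 * t)) * ∫ s in Ioo (0 : ℝ) 1, s ^ ((d : ℝ) / 2 - 1) *
      (1 - s) ^ ((lam - (d : ℝ) + 3) / 2 - 1) * exp (r ^ 2 / (4 * t) * s) ≤
      beta (d / 2) ((lam - d + 3) / 2) := by
    calc _ ≤ exp (-r ^ 2 / (4 * t)) *
          (exp (r ^ 2 / (4 * t)) * beta (d / 2) ((lam - d + 3) / 2)) :=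
          mul_le_mul_of_nonneg_left hI (exp_nonneg _)
      _ = _ := by rw [← mul_assoc, ← exp_add, neg_div, neg_add_cancel, exp_zero, one_mul]
  rw [besselBarrier, mul_assoc _ (exp _)]
  exact mul_le_mul_of_nonneg_left hdamped (by positivity)

lemma setIntegral_besselBarrier_div_rpow_le (hd : 0 < d) (hlam : (d : ℝ) - 3 < lam)
    (hc₀ : 0 ≤ c₀) (ht : 0 < t) {y : ℝ} (hy : 0 ≤ y) :
    ∫ r in Ioc 0 (√t * y), besselBarrier d lam c₀ t r / r ^ ((d : ℝ) - 1) ≤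
      (2 : ℝ) ^ ((d : ℝ) - 3 - lam) / Gamma ((lam - d + 3) / 2) * c₀ / (lam - d + 3) *
        beta (d / 2) ((lam - d + 3) / 2) * y ^ (lam - d + 3) := by
  set c := lam - d + 3 with hc_def
  have hc : 0 < c := by linarith
  set K := (2 : ℝ) ^ ((d : ℝ) - 3 - lam) / Gamma (c / 2) * c₀ * t ^ (-c / 2) *
    beta (d / 2) (c / 2)
  have hpoint : ∀ r ∈ Ioc 0 (√t * y), besselBarrier d lam c₀ t r / r ^ ((d : ℝ) - 1) ≤
      K * r ^ (c - 1) := fun r hr => by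
    calc _ ≤ (2 : ℝ) ^ ((d : ℝ) - 3 - lam) / Gamma (c / 2) * c₀ * t ^ (-c / 2) *
          r ^ (lam + 1) * beta (d / 2) (c / 2) / r ^ ((d : ℝ) - 1) :=
          div_le_div_of_nonneg_right (besselBarrier_le hd hlam hc₀ ht.le hr.1.le)
            (rpow_nonneg hr.1.le _)
      _ = K * (r ^ (lam + 1) / r ^ ((d : ℝ) - 1)) := by ring
      _ = K * r ^ (c - 1) := by rw [← rpow_sub hr.1, hc_def]; ring_nf
  have htc : t ^ (-c / 2) * t ^ (1 / 2 * c) = 1 := by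
    rw [← rpow_add ht]; ring_nf; exact rpow_zero t
  calc _ ≤ ∫ r in Ioc 0 (√t * y), K * r ^ (c - 1) := by
        refine integral_mono_of_nonneg ?_ ?_ ?_
        · filter_upwards [ae_restrict_mem measurableSet_Ioc] with r hr
          exact div_nonneg (besselBarrier_nonneg hlam hc₀ ht.le hr.1.le) (rpow_nonneg hr.1.le _)
        · exact (intervalIntegral.intervalIntegrable_rpow' (by linarith)).1.const_mul _
        · filter_upwards [ae_restrict_mem measurableSet_Ioc] with r hr
          exact hpoint r hr
    _ = K * ((√t * y) ^ c / c) := by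
        rw [integral_const_mul, integral_Ioc_rpow_sub_one hc (by positivity)]
    _ = _ := by
        rw [mul_rpow (sqrt_nonneg t) hy, sqrt_eq_rpow, ← rpow_mul ht.le]
        calc _ = (2 : ℝ) ^ ((d : ℝ) - 3 - lam) / Gamma (c / 2) * c₀ / c *
              beta (d / 2) (c / 2) * y ^ c * (t ^ (-c / 2) * t ^ (1 / 2 * c)) := by ring
          _ = _ := by rw [htc, mul_one]

end besselBarrier

/-- Uniform-in-time bound for the barrier function. -/
theorem besselBarrier_uniform_bound (d : ℕ) (hd : 3 ≤ d) (lam c₀ : ℝ)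
    (hlam : (d : ℝ) - 3 < lam ∧ lam ≤ (d : ℝ) - 1) (hc₀ : 0 < c₀)
    (ystar : ℝ) (hy : 0 < ystar) :
    (∀ t : ℝ, 0 < t →
      (∫ r in Set.Ioc (0 : ℝ) (Real.sqrt t * ystar),
          besselBarrier d lam c₀ t r / r ^ ((d : ℝ) - 1))
        ≤ ((2 : ℝ) ^ ((d : ℝ) - 3 - lam) / Real.Gamma ((lam - d + 3) / 2)) * c₀
            / (lam - d + 3) *
          (Real.Gamma ((d : ℝ) / 2) * Real.Gamma ((lam - (d : ℝ) + 3) / 2) /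
            Real.Gamma ((d : ℝ) / 2 + (lam - (d : ℝ) + 3) / 2)) *
          ystar ^ (lam - (d : ℝ) + 3)) ∧
    BddAbove {y : ℝ | ∃ t : ℝ, 0 < t ∧
      y = ∫ r in Set.Ioc (0 : ℝ) (Real.sqrt t * ystar),
        besselBarrier d lam c₀ t r / r ^ ((d : ℝ) - 1)} := by
  have hbound := fun t (ht : 0 < t) =>
    setIntegral_besselBarrier_div_rpow_le (by omega) hlam.1 hc₀.le ht hy.le
  exact ⟨hbound, _, by rintro y ⟨t, ht, rfl⟩; exact hbound t ht⟩
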